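/- arXiv:1603.07783 — 2 statements merged into one kernel-verified Lean document; each statement's English description precedes it below -/
import Mathlib

section
/- Let X be a closed subspace of a real Hilbert space Y and let R : Y → Y be a bounded linear operator. Then ⟨u, R u⟩ ≤ 0 for all u ∈ X if and only if there exist bounded linear operators M, T : Y → Y such that R = M + T, ⟨w, M w⟩ ≤ 0 for all w ∈ Y, and ⟨u, T u⟩ = 0 for all u ∈ X. -/
open RealInnerProductSpace

/-!
If `R` is nonpositive on `X`, take `M = P R P` with `P` the orthogonal projection onto `X`.
Since `P` is self-adjoint, `⟪w, P R P w⟫ = ⟪P w, R (P w)⟫ ≤ 0` for every `w`, and since `P`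
fixes `X`, the remainder `R - P R P` has vanishing quadratic form on `X`. The converse is
immediate: on `X` the quadratic form of `R = M + T` is that of `M`.
-/

namespace Submodule

variable {Y : Type*} [NormedAddCommGroup Y] [InnerProductSpace ℝ Y]
  (K : Submodule ℝ Y) [K.HasOrthogonalProjection]

noncomputable def compression (R : Y →L[ℝ] Y) : Y →L[ℝ] Y :=
  K.starProjection ∘L R ∘L K.starProjection

theorem inner_self_compression (R : Y →L[ℝ] Y) (w : Y) :
    ⟪w, K.compression R w⟫ = ⟪K.starProjection w, R (K.starProjection w)⟫ :=
  (K.inner_starProjection_left_eq_right w _).symm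

theorem inner_self_compression_nonpos {R : Y →L[ℝ] Y} (hR : ∀ u ∈ K, ⟪u, R u⟫ ≤ 0) (w : Y) :
    ⟪w, K.compression R w⟫ ≤ 0 := by
  rw [inner_self_compression]
  exact hR _ (K.starProjection_apply_mem w)

theorem inner_self_compression_of_mem (R : Y →L[ℝ] Y) {u : Y} (hu : u ∈ K) :
    ⟪u, K.compression R u⟫ = ⟪u, R u⟫ := by
  rw [inner_self_compression, K.starProjection_eq_self_iff.mpr hu]

theorem inner_self_sub_compression_of_mem (R : Y →L[ℝ] Y) {u : Y} (hu : u ∈ K) :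
    ⟪u, (R - K.compression R) u⟫ = 0 := by
  rw [sub_apply, inner_sub_right, K.inner_self_compression_of_mem R hu,
    sub_self]

end Submodule

theorem negativity_on_subspace_decomposition
    {Y : Type*} [NormedAddCommGroup Y] [InnerProductSpace ℝ Y] [CompleteSpace Y]
    (X : Submodule ℝ Y) (hX : IsClosed (X : Set Y)) (R : Y →L[ℝ] Y) :
    (∀ u ∈ X, ⟪u, R u⟫ ≤ 0) ↔
      ∃ M T : Y →L[ℝ] Y, R = M + T ∧ (∀ w : Y, ⟪w, M w⟫ ≤ 0) ∧
        ∀ u ∈ X, ⟪u, T u⟫ = 0 := by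
  have : CompleteSpace X := hX.completeSpace_coe
  constructor
  · intro hR
    exact ⟨X.compression R, R - X.compression R, (add_sub_cancel _ _).symm,
      X.inner_self_compression_nonpos hR, fun u hu ↦ X.inner_self_sub_compression_of_mem R hu⟩
  · rintro ⟨M, T, rfl, hM, hT⟩ u hu
    rw [add_apply, inner_add_right, hT u hu, add_zero]
    exact hM u
end

section
/- Let Z₁ : [a,b] → ℝ^{k×n} and Z₂ : [a,b]×[a,b] → ℝ^{m×n} be continuous matrix-valued functions, and let P be a positive semidefinite real symmetric (k+m)×(k+m) matrix partitioned into blocks P₁₁ ∈ ℝ^{k×k}, P₁₂ ∈ ℝ^{k×m}, P₂₁ = P₁₂ᵀ, P₂₂ ∈ ℝ^{m×m}. For ε > 0 define M(x) = Z₁(x)ᵀ P₁₁ Z₁(x) + ε Iₙ and N(x,y) = Z₁(x)ᵀ P₁₂ Z₂(x,y) + Z₂(y,x)ᵀ P₂₁ Z₁(y) + ∫ₐᵇ Z₂(z,x)ᵀ P₂₂ Z₂(z,y) dz. Then for every w ∈ L²((a,b), ℝⁿ), the functional V(w) = ∫ₐᵇ w(x)ᵀ M(x) w(x) dx + ∫ₐᵇ∫ₐᵇ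 w(x)ᵀ N(x,y) w(y) dy dx satisfies V(w) ≥ ε ‖w‖²_{L²}. -/
open MeasureTheory Matrix

attribute [local instance] Matrix.normedAddCommGroup Matrix.normedSpace

/-!
Write `F = Z₁ w` and `G z = ∫ Z₂(z,x) w(x) dx`. By Fubini the three parts of the kernel `N`
contribute `∫ Fᵀ P₁₂ G`, `∫ Gᵀ P₂₁ F` and `∫ Gᵀ P₂₂ G`, so that
`V(w) = ∫ (F,G)ᵀ P (F,G) + ε ‖w‖²`, and the first integrand is pointwise nonnegative.
Seen as a measure space of its own, `[a,b]` makes `Z₁` and `Z₂` bounded, so every integrand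
is dominated by a multiple of `|w x| |w y|`, which is integrable since `L² ⊆ L¹` on a finite
measure space; this is what licenses each use of Fubini.
-/

open Function

namespace Matrix

-- The sup norm on matrices is only a local instance, and its topology is not reducibly the
-- product topology `Matrix` carries, so instance search cannot find this on its own.
instance instContinuousENorm {ι κ : Type*} [Fintype ι] [Fintype κ] :
    ContinuousENorm (Matrix ι κ ℝ) :=
  SeminormedAddGroup.toContinuousENorm

variable {ι κ ι' κ' : Type*} [Fintype ι] [Fintype κ]

theorem dotProduct_transpose_mul_mul_mulVec {R : Type*} [CommSemiring R] [Fintype ι'] [Fintype κ']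
    (A : Matrix ι' ι R) (Q : Matrix ι' κ' R) (C : Matrix κ' κ R) (u : ι → R) (v : κ → R) :
    u ⬝ᵥ (Aᵀ * Q * C) *ᵥ v = (A *ᵥ u) ⬝ᵥ Q *ᵥ (C *ᵥ v) := by
  simp [dotProduct_mulVec, ← vecMul_vecMul, vecMul_transpose]

theorem sumElim_dotProduct_fromBlocks_mulVec {R : Type*} [CommSemiring R]
    (A : Matrix ι ι R) (B : Matrix ι κ R) (C : Matrix κ ι R) (D : Matrix κ κ R)
    (u : ι → R) (v : κ → R) :
    Sum.elim u v ⬝ᵥ fromBlocks A B C D *ᵥ Sum.elim u v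
      = u ⬝ᵥ A *ᵥ u + u ⬝ᵥ B *ᵥ v + (v ⬝ᵥ C *ᵥ u + v ⬝ᵥ D *ᵥ v) := by
  simp [fromBlocks_mulVec, dotProduct_add, add_assoc]

theorem norm_mulVec_le {R : Type*} [NormedRing R] (A : Matrix ι κ R) (v : κ → R) :
    ‖A *ᵥ v‖ ≤ Fintype.card κ * ‖A‖ * ‖v‖ := by
  refine (pi_norm_le_iff_of_nonneg (by positivity)).2 fun i => ?_
  calc ‖∑ j, A i j * v j‖ ≤ ∑ j, ‖A i j‖ * ‖v j‖ :=
        norm_sum_le_of_le _ fun j _ => norm_mul_le _ _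
    _ ≤ ∑ _j : κ, ‖A‖ * ‖v‖ := Finset.sum_le_sum fun j _ =>
        mul_le_mul (norm_entry_le_entrywise_sup_norm A) (norm_le_pi_norm v j)
          (norm_nonneg _) (norm_nonneg _)
    _ = Fintype.card κ * ‖A‖ * ‖v‖ := by simp [mul_assoc]

theorem norm_mul_le_card {R : Type*} [NormedRing R] [Fintype κ'] (A : Matrix ι κ R)
    (B : Matrix κ κ' R) : ‖A * B‖ ≤ Fintype.card κ * ‖A‖ * ‖B‖ := by
  refine (norm_le_iff (by positivity)).2 fun i j => ?_
  calc ‖∑ l, A i l * B l j‖ ≤ ∑ l, ‖A i l‖ * ‖B l j‖ :=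
        norm_sum_le_of_le _ fun l _ => norm_mul_le _ _
    _ ≤ ∑ _l : κ, ‖A‖ * ‖B‖ := Finset.sum_le_sum fun l _ =>
        mul_le_mul (norm_entry_le_entrywise_sup_norm A) (norm_entry_le_entrywise_sup_norm B)
          (norm_nonneg _) (norm_nonneg _)
    _ = Fintype.card κ * ‖A‖ * ‖B‖ := by simp [mul_assoc]

noncomputable def toBilinCLM (Q : Matrix ι κ ℝ) : (ι → ℝ) →L[ℝ] (κ → ℝ) →L[ℝ] ℝ :=
  LinearMap.toContinuousLinearMap <| LinearMap.toContinuousLinearMap.toLinearMap ∘ₗ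
    LinearMap.mk₂ ℝ (fun u v => u ⬝ᵥ Q *ᵥ v) (fun _ _ _ => add_dotProduct _ _ _)
      (fun _ _ _ => smul_dotProduct _ _ _) (fun _ _ _ => by simp [mulVec_add, dotProduct_add])
      (fun _ _ _ => by simp [mulVec_smul, dotProduct_smul])

theorem dotProduct_integral_mulVec {α : Type*} [MeasurableSpace α] {ν : Measure α}
    {S : α → Matrix ι κ ℝ} (hS : Integrable S ν) (u : ι → ℝ) (v : κ → ℝ) :
    u ⬝ᵥ (∫ z, S z ∂ν) *ᵥ v = ∫ z, u ⬝ᵥ S z *ᵥ v ∂ν := by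
  let L : Matrix ι κ ℝ →ₗ[ℝ] ℝ :=
    { toFun := fun S => u ⬝ᵥ S *ᵥ v
      map_add' := fun _ _ => by simp [add_mulVec, dotProduct_add]
      map_smul' := fun _ _ => by simp [smul_mulVec, dotProduct_smul] }
  exact ((LinearMap.toContinuousLinearMap L).integral_comp_comm hS).symm

end Matrix

section BilinearKernel

variable {α β γ E F : Type*} [MeasurableSpace α] [MeasurableSpace β] [MeasurableSpace γ]
  {μ : Measure α} {ν : Measure β} {ρ : Measure γ}
  [NormedAddCommGroup E] [NormedSpace ℝ E] [NormedAddCommGroup F] [NormedSpace ℝ F]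

theorem integrable_prod_bilin_of_norm_le (B : E →L[ℝ] F →L[ℝ] ℝ) {u : α × β → E}
    {v : α × β → F} {g₁ : α → ℝ} {g₂ : β → ℝ} (hu : AEStronglyMeasurable u (μ.prod ν))
    (hv : AEStronglyMeasurable v (μ.prod ν)) (hug : ∀ p, ‖u p‖ ≤ g₁ p.1)
    (hvg : ∀ p, ‖v p‖ ≤ g₂ p.2) (hg₁ : Integrable g₁ μ) (hg₂ : Integrable g₂ ν) :
    Integrable (fun p => B (u p) (v p)) (μ.prod ν) :=
  ((hg₁.mul_prod hg₂).const_mul ‖B‖).mono' (B.aestronglyMeasurable_comp₂ hu hv)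
    (ae_of_all _ fun p =>
      (B.le_of_opNorm₂_le_of_le le_rfl (hug p) (hvg p)).trans_eq (mul_assoc _ _ _))

theorem integral_integral_bilin_swap [SFinite μ] [SFinite ν] [CompleteSpace E]
    (B : E →L[ℝ] F →L[ℝ] ℝ) {K : β → α → E} {f : β → F} {g : α → ℝ}
    (hK : AEStronglyMeasurable (uncurry K) (ν.prod μ)) (hKg : ∀ y x, ‖K y x‖ ≤ g x)
    (hg : Integrable g μ) (hf : Integrable f ν) :
    ∫ x, ∫ y, B (K y x) (f y) ∂ν ∂μ = ∫ y, B (∫ x, K y x ∂μ) (f y) ∂ν := by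
  have hint : Integrable (fun p : α × β => B (K p.2 p.1) (f p.2)) (μ.prod ν) :=
    integrable_prod_bilin_of_norm_le B hK.prod_swap hf.1.comp_snd (fun p => hKg p.2 p.1)
      (fun _ => le_rfl) hg hf.norm
  rw [integral_integral_swap hint]
  refine integral_congr_ae ?_
  filter_upwards [hK.prodMk_left] with y hy
  exact (B.flip (f y)).integral_comp_comm (hg.mono' hy (ae_of_all _ (hKg y)))

theorem memLp_top_integral_of_norm_le [SFinite μ] {K : γ → α → E} {g : α → ℝ}
    (hK : AEStronglyMeasurable (uncurry K) (ρ.prod μ)) (hKg : ∀ z x, ‖K z x‖ ≤ g x)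
    (hg : Integrable g μ) :
    MemLp (fun z => ∫ x, K z x ∂μ) ⊤ ρ :=
  memLp_top_of_bound hK.integral_prod_right' (∫ x, g x ∂μ)
    (ae_of_all _ fun z => norm_integral_le_of_norm_le hg (ae_of_all _ (hKg z)))

theorem integral_integral_integral_bilin [SFinite μ] [IsFiniteMeasure ρ] [CompleteSpace E]
    (B : E →L[ℝ] E →L[ℝ] ℝ) {K : γ → α → E} {g : α → ℝ}
    (hK : AEStronglyMeasurable (uncurry K) (ρ.prod μ)) (hKg : ∀ z x, ‖K z x‖ ≤ g x)
    (hg : Integrable g μ) :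
    ∫ x, ∫ y, ∫ z, B (K z x) (K z y) ∂ρ ∂μ ∂μ
      = ∫ z, B (∫ x, K z x ∂μ) (∫ y, K z y ∂μ) ∂ρ := by
  have hG := (memLp_top_integral_of_norm_le hK hKg hg).integrable le_top
  calc ∫ x, ∫ y, ∫ z, B (K z x) (K z y) ∂ρ ∂μ ∂μ
      = ∫ x, ∫ z, B (K z x) (∫ y, K z y ∂μ) ∂ρ ∂μ := by
        refine integral_congr_ae ?_
        filter_upwards [hK.prod_swap.prodMk_left] with x hx
        have hKx : Integrable (fun z => K z x) ρ :=
          Integrable.of_bound hx (g x) (ae_of_all _ fun z => hKg z x)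
        simpa only [ContinuousLinearMap.flip_apply] using
          integral_integral_bilin_swap B.flip hK hKg hg hKx
    _ = ∫ z, B (∫ x, K z x ∂μ) (∫ y, K z y ∂μ) ∂ρ := integral_integral_bilin_swap B hK hKg hg hG

theorem integrable_prod_integral_bilin [IsFiniteMeasure ρ] (B : E →L[ℝ] E →L[ℝ] ℝ)
    {K : γ → α → E} {g : α → ℝ} (hK : StronglyMeasurable (uncurry K))
    (hKg : ∀ z x, ‖K z x‖ ≤ g x) (hg : Integrable g μ) :
    Integrable (fun p : α × α => ∫ z, B (K z p.1) (K z p.2) ∂ρ) (μ.prod μ) := by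
  have hmeas : StronglyMeasurable (fun q : (α × α) × γ => B (K q.2 q.1.1) (K q.2 q.1.2)) :=
    B.continuous₂.comp_stronglyMeasurable
      ((hK.comp_measurable (measurable_snd.prodMk measurable_fst.fst)).prodMk
        (hK.comp_measurable (measurable_snd.prodMk measurable_fst.snd)))
  refine ((hg.mul_prod hg).const_mul (‖B‖ * ρ.real Set.univ)).mono'
    hmeas.integral_prod_right'.aestronglyMeasurable (ae_of_all _ fun p => ?_)
  exact (norm_integral_le_of_norm_le_const (ae_of_all _ fun z =>
    B.le_of_opNorm₂_le_of_le le_rfl (hKg z p.1) (hKg z p.2))).trans_eq (by ring)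

end BilinearKernel

section QuadraticFunctional

variable {α : Type*} [MeasurableSpace α] {μ : Measure α}
  {ι κ η : Type*} [Fintype ι] [Fintype κ] [Fintype η]
  {Z₁ : α → Matrix κ ι ℝ} {Z₂ : α → α → Matrix η ι ℝ} {C₁ C₂ : ℝ} {w : α → ι → ℝ}

noncomputable def quadFunctional (μ : Measure α) (M : α → Matrix ι ι ℝ)
    (N : α → α → Matrix ι ι ℝ) (w : α → ι → ℝ) : ℝ :=
  ∫ x, w x ⬝ᵥ M x *ᵥ w x ∂μ + ∫ x, ∫ y, w x ⬝ᵥ N x y *ᵥ w y ∂μ ∂μ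

noncomputable def kernelOp (μ : Measure α) (K : α → α → Matrix η ι ℝ) (w : α → ι → ℝ) (z : α) :
    η → ℝ :=
  ∫ x, K z x *ᵥ w x ∂μ

theorem quadFunctional_congr_ae {M : α → Matrix ι ι ℝ} {N : α → α → Matrix ι ι ℝ}
    {w w' : α → ι → ℝ} (h : w =ᵐ[μ] w') :
    quadFunctional μ M N w = quadFunctional μ M N w' := by
  unfold quadFunctional
  congr 1
  · exact integral_congr_ae (h.mono fun x hx => by simp only [hx])
  · refine integral_congr_ae (h.mono fun x hx => ?_)
    exact integral_congr_ae (h.mono fun y hy => by simp only [hx, hy])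

theorem memLp_mulVec_of_norm_le {p : ENNReal} (hZ₁ : AEStronglyMeasurable Z₁ μ)
    (hZ₁C : ∀ x, ‖Z₁ x‖ ≤ C₁) (hw : MemLp w p μ) :
    MemLp (fun x => Z₁ x *ᵥ w x) p μ :=
  hw.of_le_mul (c := Fintype.card ι * C₁)
    ((continuous_fst.matrix_mulVec continuous_snd).comp_aestronglyMeasurable₂ hZ₁ hw.1)
    (ae_of_all _ fun x => (norm_mulVec_le _ _).trans (by gcongr; exact hZ₁C x))

theorem integrable_dotProduct_mulVec (Q : Matrix κ η ℝ) {u : α → κ → ℝ} {v : α → η → ℝ}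
    (hu : MemLp u 2 μ) (hv : MemLp v 2 μ) :
    Integrable (fun x => u x ⬝ᵥ Q *ᵥ v x) μ :=
  memLp_one_iff_integrable.1 (Q.toBilinCLM.memLp_of_bilin 1 hu hv)

theorem integral_dotProduct_multiplier [DecidableEq ι] (hZ₁w : MemLp (fun x => Z₁ x *ᵥ w x) 2 μ)
    (hw : MemLp w 2 μ) (P : Matrix κ κ ℝ) (ε : ℝ) :
    ∫ x, w x ⬝ᵥ ((Z₁ x)ᵀ * P * Z₁ x + ε • 1) *ᵥ w x ∂μ
      = ∫ x, (Z₁ x *ᵥ w x) ⬝ᵥ P *ᵥ (Z₁ x *ᵥ w x) ∂μ + ε * ∫ x, w x ⬝ᵥ w x ∂μ := by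
  have hww : Integrable (fun x => w x ⬝ᵥ w x) μ := by
    simpa only [one_mulVec] using integrable_dotProduct_mulVec 1 hw hw
  simp only [add_mulVec, dotProduct_add, dotProduct_transpose_mul_mul_mulVec, smul_mulVec,
    one_mulVec, dotProduct_smul, smul_eq_mul]
  rw [integral_add (integrable_dotProduct_mulVec P hZ₁w hZ₁w) (hww.const_mul ε),
    integral_const_mul]

theorem integrable_transpose_mul_mul [IsFiniteMeasure μ] {A : α → Matrix κ ι ℝ}
    {C : α → Matrix η ι ℝ} {c : ℝ} (hA : AEStronglyMeasurable A μ) (hC : AEStronglyMeasurable C μ)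
    (hAc : ∀ z, ‖A z‖ ≤ c) (hCc : ∀ z, ‖C z‖ ≤ c) (Q : Matrix κ η ℝ) :
    Integrable (fun z => (A z)ᵀ * Q * C z) μ := by
  have hcont : Continuous fun p : Matrix κ ι ℝ × Matrix η ι ℝ => p.1ᵀ * Q * p.2 :=
    (continuous_fst.matrix_transpose.matrix_mul continuous_const).matrix_mul continuous_snd
  have hmeas : AEStronglyMeasurable (fun z => (A z)ᵀ * Q * C z) μ :=
    hcont.comp_aestronglyMeasurable (f := fun z => (A z, C z)) (hA.prodMk hC)
  have hbound : ∀ z, ‖(A z)ᵀ * Q * C z‖ ≤ Fintype.card η * (Fintype.card κ * c * ‖Q‖) * c := by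
    intro z
    have hc : 0 ≤ c := (norm_nonneg _).trans (hAc z)
    calc ‖(A z)ᵀ * Q * C z‖ ≤ Fintype.card η * ‖(A z)ᵀ * Q‖ * ‖C z‖ := norm_mul_le_card _ _
      _ ≤ Fintype.card η * (Fintype.card κ * ‖(A z)ᵀ‖ * ‖Q‖) * ‖C z‖ := by
          gcongr
          exact norm_mul_le_card _ _
      _ ≤ Fintype.card η * (Fintype.card κ * c * ‖Q‖) * c := by
          rw [norm_transpose]
          gcongr
          exacts [hAc z, hCc z]
  exact Integrable.of_bound hmeas _ (ae_of_all _ hbound)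

theorem memLp_kernelOp [IsFiniteMeasure μ] (hZ₂ : StronglyMeasurable (uncurry Z₂))
    (hZ₂C : ∀ z x, ‖Z₂ z x‖ ≤ C₂) (hw : MemLp w 2 μ) :
    MemLp (kernelOp μ Z₂ w) ⊤ μ :=
  memLp_top_integral_of_norm_le
    ((continuous_fst.matrix_mulVec continuous_snd).comp_aestronglyMeasurable
      (hZ₂.aestronglyMeasurable.prodMk hw.1.comp_snd))
    (fun z x => (norm_mulVec_le _ _).trans (by gcongr; exact hZ₂C z x))
    ((hw.integrable one_le_two).norm.const_mul (Fintype.card ι * C₂))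

theorem dotProduct_kernel_mulVec_eq [IsFiniteMeasure μ] (hZ₂ : StronglyMeasurable (uncurry Z₂))
    (hZ₂C : ∀ z x, ‖Z₂ z x‖ ≤ C₂) (P₁₂ : Matrix κ η ℝ) (P₂₂ : Matrix η η ℝ) (x y : α) :
    w x ⬝ᵥ ((Z₁ x)ᵀ * P₁₂ * Z₂ x y + (Z₂ y x)ᵀ * P₁₂ᵀ * Z₁ y
        + ∫ z, (Z₂ z x)ᵀ * P₂₂ * Z₂ z y ∂μ) *ᵥ w y
      = (Z₁ x *ᵥ w x) ⬝ᵥ P₁₂ *ᵥ (Z₂ x y *ᵥ w y) + (Z₂ y x *ᵥ w x) ⬝ᵥ P₁₂ᵀ *ᵥ (Z₁ y *ᵥ w y)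
        + ∫ z, (Z₂ z x *ᵥ w x) ⬝ᵥ P₂₂ *ᵥ (Z₂ z y *ᵥ w y) ∂μ := by
  have hS : Integrable (fun z => (Z₂ z x)ᵀ * P₂₂ * Z₂ z y) μ := integrable_transpose_mul_mul
    (hZ₂.comp_measurable measurable_prodMk_right).aestronglyMeasurable
    (hZ₂.comp_measurable measurable_prodMk_right).aestronglyMeasurable
    (fun z => hZ₂C z x) (fun z => hZ₂C z y) P₂₂
  rw [add_mulVec, add_mulVec, dotProduct_add, dotProduct_add, dotProduct_integral_mulVec hS]
  simp only [dotProduct_transpose_mul_mul_mulVec]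

theorem integral_integral_dotProduct_kernel [IsFiniteMeasure μ]
    (hZ₁w : MemLp (fun x => Z₁ x *ᵥ w x) 2 μ) (hZ₂ : StronglyMeasurable (uncurry Z₂))
    (hZ₂C : ∀ z x, ‖Z₂ z x‖ ≤ C₂) (hw : MemLp w 2 μ) (hwm : StronglyMeasurable w)
    (P₁₂ : Matrix κ η ℝ) (P₂₂ : Matrix η η ℝ) :
    ∫ x, ∫ y, w x ⬝ᵥ ((Z₁ x)ᵀ * P₁₂ * Z₂ x y + (Z₂ y x)ᵀ * P₁₂ᵀ * Z₁ y
        + ∫ z, (Z₂ z x)ᵀ * P₂₂ * Z₂ z y ∂μ) *ᵥ w y ∂μ ∂μ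
      = ∫ x, (Z₁ x *ᵥ w x) ⬝ᵥ P₁₂ *ᵥ kernelOp μ Z₂ w x ∂μ
        + ∫ x, kernelOp μ Z₂ w x ⬝ᵥ P₁₂ᵀ *ᵥ (Z₁ x *ᵥ w x) ∂μ
        + ∫ x, kernelOp μ Z₂ w x ⬝ᵥ P₂₂ *ᵥ kernelOp μ Z₂ w x ∂μ := by
  have hg : Integrable (fun x => Fintype.card ι * C₂ * ‖w x‖) μ :=
    (hw.integrable one_le_two).norm.const_mul _
  have hK : StronglyMeasurable (uncurry fun z x => Z₂ z x *ᵥ w x) :=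
    (continuous_fst.matrix_mulVec continuous_snd).comp_stronglyMeasurable
      (hZ₂.prodMk (hwm.comp_measurable measurable_snd))
  have hKg : ∀ z x, ‖Z₂ z x *ᵥ w x‖ ≤ Fintype.card ι * C₂ * ‖w x‖ := fun z x =>
    (norm_mulVec_le _ _).trans (by gcongr; exact hZ₂C z x)
  have hF := hZ₁w.integrable one_le_two
  have h₁ : Integrable (fun p : α × α => (Z₁ p.1 *ᵥ w p.1) ⬝ᵥ P₁₂ *ᵥ (Z₂ p.1 p.2 *ᵥ w p.2))
      (μ.prod μ) :=
    integrable_prod_bilin_of_norm_le P₁₂.toBilinCLM hF.1.comp_fst hK.aestronglyMeasurable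
      (fun _ => le_rfl) (fun p => hKg p.1 p.2) hF.norm hg
  have h₂ : Integrable (fun p : α × α => (Z₂ p.2 p.1 *ᵥ w p.1) ⬝ᵥ P₁₂ᵀ *ᵥ (Z₁ p.2 *ᵥ w p.2))
      (μ.prod μ) :=
    integrable_prod_bilin_of_norm_le P₁₂ᵀ.toBilinCLM
      (hK.comp_measurable measurable_swap).aestronglyMeasurable hF.1.comp_snd
      (fun p => hKg p.2 p.1) (fun _ => le_rfl) hg hF.norm
  have h₃ := integrable_prod_integral_bilin (μ := μ) (ρ := μ) P₂₂.toBilinCLM hK hKg hg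
  simp only [dotProduct_kernel_mulVec_eq hZ₂ hZ₂C]
  refine (integral_integral_add (h₁.add h₂) h₃).trans ?_
  rw [integral_integral_add' h₁ h₂]
  congr 1
  · congr 1
    · refine integral_congr_ae (ae_of_all _ fun x => ?_)
      exact (P₁₂.toBilinCLM (Z₁ x *ᵥ w x)).integral_comp_comm (hg.mono'
        (hK.comp_measurable measurable_prodMk_left).aestronglyMeasurable (ae_of_all _ (hKg x)))
    · exact integral_integral_bilin_swap P₁₂ᵀ.toBilinCLM hK.aestronglyMeasurable hKg hg hF
  · exact integral_integral_integral_bilin P₂₂.toBilinCLM hK.aestronglyMeasurable hKg hg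

theorem quadFunctional_eq [IsFiniteMeasure μ] [DecidableEq ι] (hZ₁ : StronglyMeasurable Z₁)
    (hZ₁C : ∀ x, ‖Z₁ x‖ ≤ C₁) (hZ₂ : StronglyMeasurable (uncurry Z₂))
    (hZ₂C : ∀ z x, ‖Z₂ z x‖ ≤ C₂) (hw : MemLp w 2 μ) (hwm : StronglyMeasurable w)
    (P₁₁ : Matrix κ κ ℝ) (P₁₂ : Matrix κ η ℝ) (P₂₂ : Matrix η η ℝ) (ε : ℝ) :
    quadFunctional μ (fun x => (Z₁ x)ᵀ * P₁₁ * Z₁ x + ε • 1)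
        (fun x y => (Z₁ x)ᵀ * P₁₂ * Z₂ x y + (Z₂ y x)ᵀ * P₁₂ᵀ * Z₁ y
          + ∫ z, (Z₂ z x)ᵀ * P₂₂ * Z₂ z y ∂μ) w
      = ∫ x, Sum.elim (Z₁ x *ᵥ w x) (kernelOp μ Z₂ w x) ⬝ᵥ fromBlocks P₁₁ P₁₂ P₁₂ᵀ P₂₂ *ᵥ
          Sum.elim (Z₁ x *ᵥ w x) (kernelOp μ Z₂ w x) ∂μ + ε * ∫ x, w x ⬝ᵥ w x ∂μ := by
  have hF := memLp_mulVec_of_norm_le hZ₁.aestronglyMeasurable hZ₁C hw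
  have hG := (memLp_kernelOp hZ₂ hZ₂C hw).mono_exponent (p := 2) le_top
  unfold quadFunctional
  rw [integral_dotProduct_multiplier hF hw, integral_integral_dotProduct_kernel hF hZ₂ hZ₂C hw hwm]
  simp only [sumElim_dotProduct_fromBlocks_mulVec]
  have h₁₁ := integrable_dotProduct_mulVec P₁₁ hF hF
  have h₁₂ := integrable_dotProduct_mulVec P₁₂ hF hG
  have h₂₁ := integrable_dotProduct_mulVec P₁₂ᵀ hG hF
  have h₂₂ := integrable_dotProduct_mulVec P₂₂ hG hG
  rw [integral_add (h₁₁.fun_add h₁₂) (h₂₁.fun_add h₂₂), integral_add h₁₁ h₁₂, integral_add h₂₁ h₂₂]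
  ring

theorem mul_integral_le_quadFunctional [IsFiniteMeasure μ] [DecidableEq ι]
    (hZ₁ : StronglyMeasurable Z₁) (hZ₁C : ∀ x, ‖Z₁ x‖ ≤ C₁)
    (hZ₂ : StronglyMeasurable (uncurry Z₂)) (hZ₂C : ∀ z x, ‖Z₂ z x‖ ≤ C₂) (hw : MemLp w 2 μ)
    {P₁₁ : Matrix κ κ ℝ} {P₁₂ : Matrix κ η ℝ} {P₂₂ : Matrix η η ℝ}
    (hP : (fromBlocks P₁₁ P₁₂ P₁₂ᵀ P₂₂).PosSemidef) (ε : ℝ) :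
    ε * ∫ x, w x ⬝ᵥ w x ∂μ ≤ quadFunctional μ (fun x => (Z₁ x)ᵀ * P₁₁ * Z₁ x + ε • 1)
        (fun x y => (Z₁ x)ᵀ * P₁₂ * Z₂ x y + (Z₂ y x)ᵀ * P₁₂ᵀ * Z₁ y
          + ∫ z, (Z₂ z x)ᵀ * P₂₂ * Z₂ z y ∂μ) w := by
  obtain ⟨w', hw'm, hww'⟩ := hw.1
  have hsq : ∫ x, w x ⬝ᵥ w x ∂μ = ∫ x, w' x ⬝ᵥ w' x ∂μ :=
    integral_congr_ae (hww'.mono fun x hx => by simp only [hx])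
  rw [hsq, quadFunctional_congr_ae hww', quadFunctional_eq hZ₁ hZ₁C hZ₂ hZ₂C (hw.ae_eq hww') hw'm]
  have hnonneg : 0 ≤ ∫ x, Sum.elim (Z₁ x *ᵥ w' x) (kernelOp μ Z₂ w' x) ⬝ᵥ
      fromBlocks P₁₁ P₁₂ P₁₂ᵀ P₂₂ *ᵥ Sum.elim (Z₁ x *ᵥ w' x) (kernelOp μ Z₂ w' x) ∂μ :=
    integral_nonneg fun x => (hP.dotProduct_mulVec_nonneg _).trans_eq (by rw [star_trivial])
  linarith

end QuadraticFunctional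

-- Instance search does not unfold `Matrix` to the function type to find its metrizability.
theorem Continuous.stronglyMeasurable_matrix {X ι κ : Type*} [TopologicalSpace X]
    [MeasurableSpace X] [OpensMeasurableSpace X] [Fintype ι] [Fintype κ] {f : X → Matrix ι κ ℝ}
    (hf : Continuous f) :
    StronglyMeasurable f :=
  Continuous.stronglyMeasurable (β := ι → κ → ℝ) hf

theorem intervalIntegral.integral_eq_integral_comap_Icc {E : Type*} [NormedAddCommGroup E]
    [NormedSpace ℝ E] {a b : ℝ} (hab : a ≤ b) (f : ℝ → E) :
    ∫ x in a..b, f x = ∫ x : Set.Icc a b, f x ∂(volume.comap Subtype.val) := by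
  rw [intervalIntegral.integral_of_le hab, ← integral_Icc_eq_integral_Ioc,
    integral_subtype_comap measurableSet_Icc]

instance Real.isFiniteMeasure_comap_Icc (a b : ℝ) :
    IsFiniteMeasure (volume.comap (Subtype.val : Set.Icc a b → ℝ)) :=
  ⟨by
    rw [Measure.comap_apply _ Subtype.val_injective (fun _ => measurableSet_Icc.subtype_image) _
      MeasurableSet.univ, Set.image_univ, Subtype.range_coe]
    exact measure_Icc_lt_top⟩

theorem sos_functional_positivity_general
    {n k m : ℕ} (a b : ℝ) (hab : a < b)
    (Z₁ : ℝ → Matrix (Fin k) (Fin n) ℝ) (Z₂ : ℝ → ℝ → Matrix (Fin m) (Fin n) ℝ)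
    (hZ₁ : ContinuousOn Z₁ (Set.Icc a b))
    (hZ₂ : ContinuousOn (fun p : ℝ × ℝ => Z₂ p.1 p.2) (Set.Icc a b ×ˢ Set.Icc a b))
    (P₁₁ : Matrix (Fin k) (Fin k) ℝ) (P₁₂ : Matrix (Fin k) (Fin m) ℝ)
    (P₂₂ : Matrix (Fin m) (Fin m) ℝ)
    (hP : (Matrix.fromBlocks P₁₁ P₁₂ P₁₂ᵀ P₂₂).PosSemidef)
    (ε : ℝ)
    (M : ℝ → Matrix (Fin n) (Fin n) ℝ)
    (hM : ∀ x, M x = (Z₁ x)ᵀ * P₁₁ * Z₁ x + ε • (1 : Matrix (Fin n) (Fin n) ℝ))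
    (N : ℝ → ℝ → Matrix (Fin n) (Fin n) ℝ)
    (hN : ∀ x y, N x y = (Z₁ x)ᵀ * P₁₂ * Z₂ x y + (Z₂ y x)ᵀ * P₁₂ᵀ * Z₁ y
        + ∫ z in a..b, (Z₂ z x)ᵀ * P₂₂ * Z₂ z y)
    (w : ℝ → Fin n → ℝ)
    (hw : MemLp w 2 (volume.restrict (Set.Ioo a b))) :
    (∫ x in a..b, w x ⬝ᵥ (M x).mulVec (w x))
      + (∫ x in a..b, ∫ y in a..b, w x ⬝ᵥ (N x y).mulVec (w y))
      ≥ ε * ∫ x in a..b, w x ⬝ᵥ w x := by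
  obtain ⟨C₁, hC₁⟩ := isCompact_Icc.exists_bound_of_continuousOn hZ₁
  obtain ⟨C₂, hC₂⟩ := (isCompact_Icc.prod isCompact_Icc).exists_bound_of_continuousOn hZ₂
  have hwIcc : MemLp (fun x : Set.Icc a b => w x) 2 (volume.comap Subtype.val) := by
    rw [Measure.restrict_congr_set Ioo_ae_eq_Icc] at hw
    exact hw.comp_measurePreserving (measurePreserving_subtype_coe measurableSet_Icc)
  simp only [hM, hN, intervalIntegral.integral_eq_integral_comap_Icc hab.le]
  exact mul_integral_le_quadFunctional (Z₂ := fun z x : Set.Icc a b => Z₂ z x)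
    (hZ₁.comp_continuous continuous_subtype_val Subtype.prop).stronglyMeasurable_matrix
    (fun x => hC₁ x x.2)
    (hZ₂.comp_continuous (continuous_subtype_val.prodMap continuous_subtype_val)
      fun p => ⟨p.1.2, p.2.2⟩).stronglyMeasurable_matrix
    (fun z x => hC₂ (z, x) ⟨z.2, x.2⟩) hwIcc hP ε

theorem sos_functional_positivity
    {n k m : ℕ} (a b : ℝ) (hab : a < b)
    (Z₁ : ℝ → Matrix (Fin k) (Fin n) ℝ) (Z₂ : ℝ → ℝ → Matrix (Fin m) (Fin n) ℝ)
    (hZ₁ : ContinuousOn Z₁ (Set.Icc a b))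
    (hZ₂ : ContinuousOn (fun p : ℝ × ℝ => Z₂ p.1 p.2) (Set.Icc a b ×ˢ Set.Icc a b))
    (P₁₁ : Matrix (Fin k) (Fin k) ℝ) (P₁₂ : Matrix (Fin k) (Fin m) ℝ)
    (P₂₂ : Matrix (Fin m) (Fin m) ℝ)
    (hP : (Matrix.fromBlocks P₁₁ P₁₂ P₁₂ᵀ P₂₂).PosSemidef)
    (ε : ℝ) (hε : 0 < ε)
    (M : ℝ → Matrix (Fin n) (Fin n) ℝ)
    (hM : ∀ x, M x = (Z₁ x)ᵀ * P₁₁ * Z₁ x + ε • (1 : Matrix (Fin n) (Fin n) ℝ))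
    (N : ℝ → ℝ → Matrix (Fin n) (Fin n) ℝ)
    (hN : ∀ x y, N x y = (Z₁ x)ᵀ * P₁₂ * Z₂ x y + (Z₂ y x)ᵀ * P₁₂ᵀ * Z₁ y
        + ∫ z in a..b, (Z₂ z x)ᵀ * P₂₂ * Z₂ z y)
    (w : ℝ → Fin n → ℝ)
    (hw : MemLp w 2 (volume.restrict (Set.Ioo a b))) :
    (∫ x in a..b, w x ⬝ᵥ (M x).mulVec (w x))
      + (∫ x in a..b, ∫ y in a..b, w x ⬝ᵥ (N x y).mulVec (w y))
      ≥ ε * ∫ x in a..b, w x ⬝ᵥ w x :=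
  sos_functional_positivity_general a b hab Z₁ Z₂ hZ₁ hZ₂ P₁₁ P₁₂ P₂₂ hP ε M hM N hN w hw
end
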